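/- For every infinite 7/3-power-free binary word w, there exists a position i such that the lengths of squares beginning at position i in w are bounded; i.e., w does not contain arbitrarily large squares beginning at every position. -/

import Mathlib

def mu (w : List Bool) : List Bool := w.flatMap (fun b => if b then [true, false] else [false, true])

def isPow (beta : ℚ) (w : List Bool) : Prop :=
  ∃ (n : ℕ) (x x' : List Bool), x ≠ [] ∧ x' <+: x ∧
    w = (List.replicate n x).flatten ++ x' ∧ beta = n + (x'.length : ℚ) / (x.length : ℚ)

def PowFree (a : ℚ) (w : List Bool) : Prop :=
  ∀ v, v <:+: w → ∀ beta : ℚ, a ≤ beta → ¬ isPow beta v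

def OverlapFree (w : List Bool) : Prop :=
  ∀ u v : List Bool, u ≠ [] → ¬ (u ++ v ++ u ++ v ++ u) <:+: w

def seg (w : ℕ → Bool) (i n : ℕ) : List Bool := (List.range n).map (fun j => w (i + j))

def FactorOf (v : List Bool) (w : ℕ → Bool) : Prop := ∃ i, v = seg w i v.length

def PowFreeInf (a : ℚ) (w : ℕ → Bool) : Prop :=
  ∀ v, FactorOf v w → ∀ beta : ℚ, a ≤ beta → ¬ isPow beta v

def OverlapFreeInf (w : ℕ → Bool) : Prop :=
  ∀ u v : List Bool, u ≠ [] → ¬ FactorOf (u ++ v ++ u ++ v ++ u) w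

def SqLenAt (w : ℕ → Bool) (i m : ℕ) : Prop := ∀ j < m, w (i + j) = w (i + m + j)

def SqAt (w : ℕ → Bool) (i : ℕ) : Prop := ∃ m, 0 < m ∧ SqLenAt w i m

/-!
In a `7/3`-power-free binary word the doubles `aa` at positions `≥ 1` all have the same parity:
an odd gap between consecutive doubles would create a cube, the `7/3`-power `b̄bbb̄bbb̄`, or an
alternation `ababa`. Hence the word is `x μ(y)` with `|x| ≤ 2`, and `y` is again
`7/3`-power-free. Two squares at position `0` with periods `m < n` whose halves end with the same
letter are then impossible: odd periods other than `1` and `3` clash with the `μ`-structure, and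
even periods halve to two such squares in `y`. With only two letters available, the word cannot
begin with three squares, so the squares at position `0` are bounded.
-/

theorem length_seg (v : ℕ → Bool) (i n : ℕ) : (seg v i n).length = n := by
  simp [seg]

theorem seg_add (v : ℕ → Bool) (i a b : ℕ) :
    seg v i (a + b) = seg v i a ++ seg v (i + a) b := by
  simp [seg, List.range_add, Nat.add_assoc]

theorem seg_succ (v : ℕ → Bool) (i n : ℕ) : seg v i (n + 1) = seg v i n ++ [v (i + n)] := by
  rw [seg_add]
  simp [seg]

theorem seg_eq_of_periodic {v : ℕ → Bool} {i p L : ℕ}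
    (hper : ∀ j, j + p < L → v (i + j) = v (i + j + p)) {n r : ℕ} (h : n * p + r ≤ L) :
    seg v i (n * p + r) = (List.replicate n (seg v i p)).flatten ++ seg v i r := by
  induction n with
  | zero => simp
  | succ n ih =>
    have hshift : seg v (i + p) (n * p + r) = seg v i (n * p + r) := by
      simp only [seg]
      refine List.map_congr_left fun j hj => ?_
      rw [List.mem_range] at hj
      rw [hper j (by nlinarith), Nat.add_right_comm]
    rw [show (n + 1) * p + r = p + (n * p + r) by ring, seg_add, hshift, ih (by nlinarith),
      List.replicate_succ, List.flatten_cons, List.append_assoc]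

theorem PowFreeInf.lt_of_periodic {a : ℚ} {v : ℕ → Bool} (hf : PowFreeInf a v) {i p L : ℕ}
    (hp : 0 < p) (hper : ∀ j, j + p < L → v (i + j) = v (i + j + p)) : (L : ℚ) < a * p := by
  by_contra! hL
  obtain ⟨n, r, hnr, hrp⟩ : ∃ n r, n * p + r = L ∧ r ≤ p :=
    ⟨L / p, L % p, Nat.div_add_mod' L p, (Nat.mod_lt L hp).le⟩
  have hp' : (0 : ℚ) < p := by exact_mod_cast hp
  refine hf (seg v i L) ⟨i, by rw [length_seg]⟩ (n + r / (p : ℚ)) ?_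
    ⟨n, seg v i p, seg v i r, ?_, ?_, ?_, by rw [length_seg, length_seg]⟩
  · rw [← hnr] at hL
    push_cast at hL
    rw [← sub_le_iff_le_add', le_div_iff₀ hp']
    linarith
  · rw [← List.length_pos_iff, length_seg]; exact hp
  · exact ⟨seg v (i + r) (p - r), by rw [← seg_add, Nat.add_sub_cancel' hrp]⟩
  · subst hnr
    exact seg_eq_of_periodic hper le_rfl

section Doubles

variable {v : ℕ → Bool}

theorem PowFreeInf.ne_of_eq_succ (hf : PowFreeInf (7/3) v) {i : ℕ} (h : v i = v (i + 1)) :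
    v (i + 1) ≠ v (i + 2) := by
  intro h'
  have := hf.lt_of_periodic (i := i) (p := 1) (L := 3) one_pos fun j (hj : j + 1 < 3) => by
    obtain rfl | rfl : j = 0 ∨ j = 1 := by omega
    exacts [h, h']
  norm_num at this

theorem PowFreeInf.exists_eq_succ (hf : PowFreeInf (7/3) v) (i : ℕ) :
    ∃ e, i ≤ e ∧ e < i + 4 ∧ v e = v (e + 1) := by
  by_contra! h
  have hne (j : ℕ) (hj : j < 4) : v (i + j + 1) = !v (i + j) :=
    Bool.eq_not.mpr (h (i + j) (by omega) (by omega)).symm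
  have := hf.lt_of_periodic (i := i) (p := 2) (L := 5) two_pos fun j (hj : j + 2 < 5) => by
    rw [show i + j + 2 = i + (j + 1) + 1 by ring, hne (j + 1) (by omega), ← add_assoc,
      hne j (by omega), Bool.not_not]
  norm_num at this

theorem PowFreeInf.even_of_consecutive_doubles (hf : PowFreeInf (7/3) v) {d g : ℕ} (hd : 1 ≤ d)
    (h : v d = v (d + 1)) (h' : v (d + g) = v (d + g + 1))
    (hbetween : ∀ e, d < e → e < d + g → v e ≠ v (e + 1)) : g % 2 = 0 := by
  by_contra hodd
  obtain rfl | rfl | hg : g = 1 ∨ g = 3 ∨ 5 ≤ g := by omega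
  · exact hf.ne_of_eq_succ h h'
  · -- the letters from `d - 1` on read `b̄ b b b̄ b b b̄`, a `7/3`-power of period 3
    obtain ⟨c, rfl⟩ : ∃ c, d = c + 1 := ⟨d - 1, by omega⟩
    set b := v (c + 1)
    have h0 : v c = !b := Bool.eq_not.mpr fun h₀ => hf.ne_of_eq_succ h₀ h
    have h2 : v (c + 2) = b := h.symm
    have h3 : v (c + 3) = !b := by
      rw [← h2]
      exact Bool.eq_not.mpr (hbetween (c + 2) (by omega) (by omega)).symm
    have h4 : v (c + 4) = b := by
      rw [← Bool.not_not b, ← h3]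
      exact Bool.eq_not.mpr (hbetween (c + 3) (by omega) (by omega)).symm
    have h5 : v (c + 5) = b := by rw [← h4]; exact h'.symm
    have h6 : v (c + 6) = !b := by
      rw [← h5]
      exact Bool.eq_not.mpr (hf.ne_of_eq_succ (h4.trans h5.symm)).symm
    have := hf.lt_of_periodic (i := c) (p := 3) (L := 7) three_pos fun j (hj : j + 3 < 7) => by
      obtain rfl | rfl | rfl | rfl : j = 0 ∨ j = 1 ∨ j = 2 ∨ j = 3 := by omega
      all_goals simp [h0, h2, h3, h4, h5, h6, b]
    norm_num at this
  · obtain ⟨e, he, he', hee⟩ := hf.exists_eq_succ (d + 1)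
    exact hbetween e (by omega) (by omega) hee

theorem PowFreeInf.mod_two_eq_of_doubles (hf : PowFreeInf (7/3) v) {d d' : ℕ} (hd : 1 ≤ d)
    (hd' : 1 ≤ d') (h : v d = v (d + 1)) (h' : v d' = v (d' + 1)) : d % 2 = d' % 2 := by
  wlog hle : d ≤ d' generalizing d d'
  · exact (this hd' hd h' h (by omega)).symm
  obtain ⟨g, rfl⟩ := Nat.exists_eq_add_of_le hle
  induction g using Nat.strong_induction_on generalizing d with
  | _ g ih =>
    by_cases hbetween : ∃ e, d < e ∧ e < d + g ∧ v e = v (e + 1)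
    · obtain ⟨e, hde, heg, he⟩ := hbetween
      obtain ⟨k, rfl⟩ := Nat.exists_eq_add_of_lt hde
      have h₁ := ih (k + 1) (by omega) hd h (by omega) (by rwa [← add_assoc]) (by omega)
      have h₂ := ih (g - (k + 1)) (by omega) (d := d + k + 1) (by omega) he (by omega)
        (by rwa [show d + k + 1 + (g - (k + 1)) = d + g by omega]) (by omega)
      omega
    · push Not at hbetween
      have := hf.even_of_consecutive_doubles hd h h' hbetween
      omega

end Doubles

theorem mu_append (a b : List Bool) : mu (a ++ b) = mu a ++ mu b :=
  List.flatMap_append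

theorem length_mu (a : List Bool) : (mu a).length = 2 * a.length := by
  induction a with
  | nil => rfl
  | cons b a ih => cases b <;> simp [mu] at ih ⊢ <;> omega

theorem mu_flatten_replicate (n : ℕ) (x : List Bool) :
    mu (List.replicate n x).flatten = (List.replicate n (mu x)).flatten := by
  induction n with
  | zero => rfl
  | succ n ih => simp [List.replicate_succ, mu_append, ih]

theorem List.IsPrefix.mu {a b : List Bool} (h : a <+: b) : mu a <+: mu b := by
  obtain ⟨t, rfl⟩ := h
  exact ⟨_root_.mu t, (mu_append a t).symm⟩

theorem isPow.mu {β : ℚ} {u : List Bool} (h : isPow β u) : isPow β (mu u) := by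
  obtain ⟨n, x, x', hx, hx', rfl, rfl⟩ := h
  refine ⟨n, _root_.mu x, _root_.mu x', ?_, hx'.mu, by rw [mu_append, mu_flatten_replicate], ?_⟩
  · rwa [← List.length_pos_iff, length_mu, Nat.mul_pos_iff_of_pos_left two_pos,
      List.length_pos_iff]
  · rw [length_mu, length_mu]
    push_cast
    rw [mul_div_mul_left _ _ two_ne_zero]

/-- From position `δ` on, `v` is the image under `mu` of `deflate v δ`. -/
def IsMuFrom (v : ℕ → Bool) (δ : ℕ) : Prop := ∀ k, v (δ + 2 * k + 1) = !v (δ + 2 * k)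

def deflate (v : ℕ → Bool) (δ : ℕ) : ℕ → Bool := fun k => v (δ + 2 * k)

section Mu

variable {v : ℕ → Bool} {δ : ℕ}

theorem IsMuFrom.eq_not (h : IsMuFrom v δ) {d : ℕ} (hd : δ ≤ d) (hpar : d % 2 = δ % 2) :
    v (d + 1) = !v d := by
  obtain ⟨k, rfl⟩ : ∃ k, d = δ + 2 * k := ⟨(d - δ) / 2, by omega⟩
  exact h k

theorem IsMuFrom.ne_succ (h : IsMuFrom v δ) {d : ℕ} (hd : δ ≤ d) (hpar : d % 2 = δ % 2) :
    v d ≠ v (d + 1) := by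
  rw [h.eq_not hd hpar]
  exact Bool.self_ne_not _

theorem IsMuFrom.mu_seg_deflate (h : IsMuFrom v δ) (k n : ℕ) :
    mu (seg (deflate v δ) k n) = seg v (δ + 2 * k) (2 * n) := by
  induction n with
  | zero => rfl
  | succ n ih =>
    have hpair : seg v (δ + 2 * k + 2 * n) 2 = [v (δ + 2 * (k + n)), !v (δ + 2 * (k + n))] := by
      rw [← h (k + n)]
      simp [seg, List.range_succ, mul_add, add_assoc]
    rw [seg_succ, mu_append, ih, Nat.mul_succ, seg_add, hpair]
    simp only [mu, deflate, List.flatMap_cons, List.flatMap_nil, List.append_nil,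
      List.append_cancel_left_eq]
    cases v (δ + 2 * (k + n)) <;> rfl

theorem PowFreeInf.deflate {a : ℚ} (hf : PowFreeInf a v) (h : IsMuFrom v δ) :
    PowFreeInf a (deflate v δ) := by
  rintro u ⟨k, hk⟩ β hβ hpow
  refine hf (mu u) ⟨δ + 2 * k, ?_⟩ β hβ hpow.mu
  rw [hk, h.mu_seg_deflate, length_seg]

theorem PowFreeInf.exists_isMuFrom (hf : PowFreeInf (7/3) v) :
    ∃ δ ≤ 2, (δ = 2 → v 0 = v 1) ∧ IsMuFrom v δ := by
  obtain ⟨d₁, hd₁, -, hdouble⟩ := hf.exists_eq_succ 1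
  have hpar {d : ℕ} (hd : 1 ≤ d) (h : v d = v (d + 1)) : d % 2 = d₁ % 2 :=
    hf.mod_two_eq_of_doubles hd hd₁ h hdouble
  have isMuFrom_of {δ : ℕ} (hδ : ∀ k, v (δ + 2 * k) ≠ v (δ + 2 * k + 1)) :
      IsMuFrom v δ :=
    fun k => Bool.eq_not.mpr (hδ k).symm
  rcases Nat.mod_two_eq_zero_or_one d₁ with h₁ | h₁
  · exact ⟨1, by omega, by omega, isMuFrom_of fun k hk => by have := hpar (by omega) hk; omega⟩
  by_cases h₀ : v 0 = v 1
  · refine ⟨2, le_rfl, fun _ => h₀, isMuFrom_of fun k hk => ?_⟩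
    have := hpar (by omega) hk
    omega
  refine ⟨0, by omega, by omega, isMuFrom_of fun k hk => ?_⟩
  rcases k.eq_zero_or_pos with rfl | hk₀
  · exact h₀ hk
  · have := hpar (by omega) hk
    omega

end Mu

def PrefixSquare (v : ℕ → Bool) (m : ℕ) : Prop := ∀ j < m, v j = v (m + j)

section PrefixSquares

variable {v : ℕ → Bool} {δ m n : ℕ}

theorem PrefixSquare.deflate (h : PrefixSquare v (2 * m)) {c : ℕ} (hc : c ≤ 1) :
    PrefixSquare (deflate v c) m := fun k hk => by
  simp only [_root_.deflate]
  rw [h (c + 2 * k) (by omega)]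
  ring_nf

theorem IsMuFrom.ne_succ_of_prefixSquare (hmu : IsMuFrom v δ) (hsq : PrefixSquare v m)
    (hm : m % 2 = 1) {e : ℕ} (he : δ ≤ e + 1) (h : e % 2 = δ % 2 ∨ e + 1 < m) :
    v e ≠ v (e + 1) := by
  by_cases hpar : e % 2 = δ % 2
  · exact hmu.ne_succ (by omega) hpar
  · rw [hsq e (by omega), hsq (e + 1) (by omega), ← add_assoc]
    exact hmu.ne_succ (by omega) (by omega)

theorem PowFreeInf.not_prefixSquare_of_odd (hf : PowFreeInf (7/3) v) (hmu : IsMuFrom v δ)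
    (hδ : δ ≤ 2) (hm : m % 2 = 1) (hm5 : 5 ≤ m) : ¬PrefixSquare v m := fun hsq => by
  obtain ⟨e, he, he', hee⟩ := hf.exists_eq_succ (δ - 1)
  exact hmu.ne_succ_of_prefixSquare hsq hm (by omega) (by omega) hee

theorem PowFreeInf.not_prefixSquare_two_three (hf : PowFreeInf (7/3) v) (h₂ : PrefixSquare v 2) :
    ¬PrefixSquare v 3 := fun h₃ => by
  have h01 : v 0 = v 1 := (h₃ 0 (by omega)).trans (h₂ 1 (by omega)).symm
  exact hf.ne_of_eq_succ h01 (h01.symm.trans (h₂ 0 (by omega)))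

theorem PowFreeInf.prefixSquare_one_last_ne (hf : PowFreeInf (7/3) v) (h₁ : PrefixSquare v 1)
    (hn : 1 < n) (hsn : PrefixSquare v n) : v 0 ≠ v (n - 1) := fun hlast => by
  have hn0 : v 0 = v n := hsn 0 (by omega)
  have hn1 : v 1 = v (n + 1) := hsn 1 hn
  have h01 : v 0 = v 1 := h₁ 0 one_pos
  apply hf.ne_of_eq_succ (i := n - 1) <;> rw [Nat.sub_add_cancel (by omega)]
  · rw [← hlast, hn0]
  · rw [show n - 1 + 2 = n + 1 by omega, ← hn0, ← hn1, h01]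

theorem PowFreeInf.prefixSquare_three_last_ne (hf : PowFreeInf (7/3) v) (h₃ : PrefixSquare v 3)
    (hn : 3 < n) (hn2 : n % 2 = 0) (hsn : PrefixSquare v n) : v 2 ≠ v (n - 1) := fun hlast => by
  have hn0 : v 0 = v n := hsn 0 (by omega)
  have hn1 : v 1 = v (n + 1) := hsn 1 (by omega)
  have hn' : n - 1 + 1 = n := by omega
  have hparity {d d' : ℕ} (hd : 1 ≤ d) (hd' : 1 ≤ d') (h : v d = v (d + 1))
      (h' : v d' = v (d' + 1)) : d % 2 = d' % 2 := hf.mod_two_eq_of_doubles hd hd' h h'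
  by_cases h20 : v 2 = v 0
  · have := hparity (d := 2) (d' := n - 1) (by omega) (by omega)
      (by rw [← h₃ 0 (by omega), h20]) (by rw [hn', ← hlast, h20, hn0])
    omega
  by_cases h10 : v 1 = v 0
  · have := hparity (d := 3) (d' := n) (by omega) (by omega)
      (by rw [← h₃ 0 (by omega), ← h₃ 1 (by omega), h10]) (by rw [← hn0, ← hn1, h10])
    omega
  · have h12 : v 1 = v 2 := by revert h20 h10; cases v 0 <;> cases v 1 <;> cases v 2 <;> simp
    have := hparity (d := 1) (d' := 4) le_rfl (by omega) h12
      (by rw [← h₃ 1 (by omega), ← h₃ 2 (by omega), h12])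
    omega

end PrefixSquares

theorem PowFreeInf.prefixSquare_last_ne {v : ℕ → Bool} (hf : PowFreeInf (7/3) v) {m n : ℕ}
    (hm : 0 < m) (hmn : m < n) (hsm : PrefixSquare v m) (hsn : PrefixSquare v n) :
    v (m - 1) ≠ v (n - 1) := by
  induction n using Nat.strong_induction_on generalizing v m with
  | _ n ih =>
  obtain rfl | hm2 : m = 1 ∨ 2 ≤ m := by omega
  · exact hf.prefixSquare_one_last_ne hsm hmn hsn
  obtain ⟨δ, hδ, hδ2, hmu⟩ := hf.exists_isMuFrom
  rcases Nat.mod_two_eq_zero_or_one n with hn | hn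
  swap
  · obtain rfl | hn5 : n = 3 ∨ 5 ≤ n := by omega
    · obtain rfl : m = 2 := by omega
      exact (hf.not_prefixSquare_two_three hsm hsn).elim
    · exact (hf.not_prefixSquare_of_odd hmu hδ hn hn5 hsn).elim
  rcases Nat.mod_two_eq_zero_or_one m with hm' | hm'
  swap
  · obtain rfl | hm5 : m = 3 ∨ 5 ≤ m := by omega
    · exact hf.prefixSquare_three_last_ne hsm hmn hn hsn
    · exact (hf.not_prefixSquare_of_odd hmu hδ hm' hm5 hsm).elim
  obtain ⟨m, rfl⟩ : ∃ k, m = 2 * k := ⟨m / 2, by omega⟩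
  obtain ⟨n, rfl⟩ : ∃ k, n = 2 * k := ⟨n / 2, by omega⟩
  intro hlast
  obtain hδ1 | rfl : δ ≤ 1 ∨ δ = 2 := by omega
  · -- both squares halve to squares of `deflate v δ`, whose halves again end with equal letters
    refine ih n (by omega) (hf.deflate hmu) (by omega) (by omega) (hsm.deflate hδ1)
      (hsn.deflate hδ1) ?_
    show v (δ + 2 * (m - 1)) = v (δ + 2 * (n - 1))
    obtain rfl | rfl : δ = 0 ∨ δ = 1 := by omega
    · rw [show 2 * m - 1 = 0 + 2 * (m - 1) + 1 by omega,
        show 2 * n - 1 = 0 + 2 * (n - 1) + 1 by omega, hmu, hmu] at hlast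
      exact Bool.not_inj hlast
    · convert hlast using 2 <;> omega
  · have h01 : v 0 = v 1 := hδ2 rfl
    refine hmu.ne_succ (d := 2 * m) (by omega) (by omega) ?_
    rw [← add_zero (2 * m), ← hsm 0 (by omega), add_assoc, ← hsm 1 (by omega), h01]

theorem stmt7 (w : ℕ → Bool) (h : PowFreeInf (7/3) w) :
    ∃ i N, ∀ m, 0 < m → SqLenAt w i m → m ≤ N := by
  by_contra! hunbounded
  have hsq {m : ℕ} (hm : SqLenAt w 0 m) : PrefixSquare w m := fun j hj => by
    simpa using hm j hj
  obtain ⟨p, hp, hsp, -⟩ := hunbounded 0 0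
  obtain ⟨q, -, hsq', hpq⟩ := hunbounded 0 p
  obtain ⟨r, -, hsr, hqr⟩ := hunbounded 0 q
  have hne {m n : ℕ} (hm : 0 < m) (hmn : m < n) (hsm : SqLenAt w 0 m) (hsn : SqLenAt w 0 n) :
      w (m - 1) ≠ w (n - 1) := h.prefixSquare_last_ne hm hmn (hsq hsm) (hsq hsn)
  have two_letters : ∀ a b c : Bool, a ≠ b → a ≠ c → b ≠ c → False := by decide
  exact two_letters _ _ _ (hne hp hpq hsp hsq') (hne hp (hpq.trans hqr) hsp hsr)
    (hne (hp.trans hpq) hqr hsq' hsr)
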